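/- Let A be a nontrivial torsion-free group. Then the free product A * ℤ contains two elements which freely generate a free subgroup of rank 2. -/

import Mathlib

/-!
A nontrivial element `g` of the torsion-free group `A` has infinite order, as does the
generator `t` of `ℤ`. By ping-pong on reduced words, a free product of injective homomorphisms
is injective; applied to `n ↦ gⁿ` and `n ↦ tⁿ`, it embeds `ℤ ∗ ℤ`, the free group on two
generators, into `A ∗ ℤ` with image generated by `g` and `t`.
-/

/-- `x` and `y` freely generate a free subgroup of rank 2: the homomorphism from the
free group on two generators sending the generators to `x` and `y` is injective. -/
def FreelyGenerateF2 {G : Type*} [Group G] (x y : G) : Prop :=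
  Function.Injective (FreeGroup.lift (fun b : Bool => if b then x else y) : FreeGroup Bool →* G)

open Monoid Function Cardinal

universe u v

namespace Monoid.CoprodI

variable {ι : Type*} {M H : ι → Type*} [∀ i, Group (M i)] [∀ i, Group (H i)]

theorem lift_of_comp_injective [Nontrivial ι] [∀ i, Nontrivial (M i)]
    (hcard : 3 ≤ #ι ∨ ∃ i, 3 ≤ #(H i)) (φ : ∀ i, H i →* M i) (hφ : ∀ i, Injective (φ i)) :
    Injective (lift fun i => of.comp (φ i)) := by
  classical
  -- The ping-pong set of the factor `i` consists of the reduced words starting with a letter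
  -- from `M i`.
  refine lift_injective_of_ping_pong _ hcard (fun i => {w : Word M | w.fstIdx = some i})
    (fun i => ?_) (fun i j hij => ?_) (fun i j hij h hh => ?_)
  · obtain ⟨m, hm⟩ := exists_ne (1 : M i)
    exact ⟨Word.cons m .empty (by simp [Word.fstIdx, Word.empty]) hm, Word.fstIdx_cons ..⟩
  · exact Set.disjoint_left.2 fun w hi hj => hij (Option.some_injective _ (hi.symm.trans hj))
  · rintro _ ⟨w, hw, rfl⟩
    have hwi : w.fstIdx ≠ some i := by
      rw [show w.fstIdx = some j from hw]
      exact fun h => hij (Option.some_injective _ h).symm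
    have hφh : φ i h ≠ 1 := (map_ne_one_iff _ (hφ i)).2 hh
    show of (φ i h) • w ∈ _
    rw [← Word.cons_eq_smul (h1 := hwi) (h2 := hφh)]
    exact Word.fstIdx_cons ..

end Monoid.CoprodI

theorem FreeGroup.injective_lift_unit_of_not_isOfFinOrder {G : Type*} [Group G] {x : G}
    (hx : ¬IsOfFinOrder x) : Injective (FreeGroup.lift fun _ : Unit => x) := by
  have hlift : ∀ w, FreeGroup.lift (fun _ : Unit => x) w = x ^ freeGroupUnitEquivInt w := by
    intro w
    conv_lhs => rw [← freeGroupUnitEquivInt.symm_apply_apply w]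
    simp [freeGroupUnitEquivInt]
  intro w w' h
  rw [hlift, hlift] at h
  exact freeGroupUnitEquivInt.injective (injective_zpow_iff_not_isOfFinOrder.2 hx h)

theorem FreeGroup.injective_lift_coprodI_of_not_isOfFinOrder {ι : Type*} [Nontrivial ι]
    {M : ι → Type*} [∀ i, Group (M i)] (g : ∀ i, M i) (hg : ∀ i, ¬IsOfFinOrder (g i)) :
    Injective (FreeGroup.lift fun i => CoprodI.of (g i)) := by
  have : ∀ i, Nontrivial (M i) := fun i =>
    nontrivial_of_ne (g i) 1 fun h => hg i (h ▸ IsOfFinOrder.one)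
  have hfactor : FreeGroup.lift (fun i => CoprodI.of (g i)) =
      (CoprodI.lift fun i => CoprodI.of.comp (FreeGroup.lift fun _ => g i)).comp
        (freeGroupEquivCoprodI (ι := ι)).toMonoidHom := by
    ext i
    simp
  have hcard : 3 ≤ #(FreeGroup Unit) := by
    rw [mk_congr freeGroupUnitEquivInt, mk_int]
    exact (natCast_lt_aleph0 (n := 3)).le
  rw [hfactor, MonoidHom.coe_comp]
  exact (CoprodI.lift_of_comp_injective (Or.inr ⟨Classical.arbitrary ι, hcard⟩) _
    fun i => injective_lift_unit_of_not_isOfFinOrder (hg i)).comp freeGroupEquivCoprodI.injective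

theorem ULift.not_isOfFinOrder_up {G : Type u} [Group G] {g : G} (hg : ¬IsOfFinOrder g) :
    ¬IsOfFinOrder (ULift.up.{v} g) :=
  (Injective.isOfFinOrder_iff (f := (MulEquiv.ulift.{u, v} (α := G)).symm.toMonoidHom)
    (MulEquiv.injective _)).not.2 hg

namespace Monoid.Coprod

/-- `G ∗ H` as a `Bool`-indexed free product; `ULift` puts both factors in one universe. -/
def factor (G : Type u) (H : Type v) : Bool → Type max u v
  | true => ULift.{v} G
  | false => ULift.{u} H

instance (G : Type u) (H : Type v) [Group G] [Group H] : ∀ b, Group (factor G H b)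
  | true => inferInstanceAs (Group (ULift G))
  | false => inferInstanceAs (Group (ULift H))

def toCoprodI (G : Type u) (H : Type v) [Group G] [Group H] :
    Coprod G H →* CoprodI (factor G H) :=
  lift ((CoprodI.of (i := true)).comp MulEquiv.ulift.symm.toMonoidHom)
    ((CoprodI.of (i := false)).comp MulEquiv.ulift.symm.toMonoidHom)

theorem freelyGenerateF2_inl_inr {G : Type u} {H : Type v} [Group G] [Group H]
    {g : G} {h : H} (hg : ¬IsOfFinOrder g) (hh : ¬IsOfFinOrder h) :
    FreelyGenerateF2 (inl g : Coprod G H) (inr h) := by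
  let c : ∀ b, factor G H b
    | true => ULift.up g
    | false => ULift.up h
  have hc : ∀ b, ¬IsOfFinOrder (c b)
    | true => ULift.not_isOfFinOrder_up hg
    | false => ULift.not_isOfFinOrder_up hh
  have hcomp : (toCoprodI G H).comp (FreeGroup.lift fun b => if b then inl g else inr h) =
      FreeGroup.lift fun b => CoprodI.of (c b) := by
    ext (_ | _) <;> rfl
  refine Injective.of_comp (f := toCoprodI G H) ?_
  rw [← MonoidHom.coe_comp, hcomp]
  exact FreeGroup.injective_lift_coprodI_of_not_isOfFinOrder c hc

end Monoid.Coprod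

theorem free_subgroup_in_free_product_with_Z (A : Type*) [Group A] [Nontrivial A]
    (hA : ∀ g : A, g ≠ 1 → ¬IsOfFinOrder g) :
    ∃ x y : Monoid.Coprod A (Multiplicative ℤ), FreelyGenerateF2 x y := by
  obtain ⟨g, hg⟩ := exists_ne (1 : A)
  have ht : ¬IsOfFinOrder (Multiplicative.ofAdd (1 : ℤ)) :=
    not_isOfFinOrder_of_isMulTorsionFree (by decide)
  exact ⟨_, _, Coprod.freelyGenerateF2_inl_inr (hA g hg) ht⟩
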